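/- For every ε with 0 < ε < 1/2 and every noiseless alternating binary protocol π of length n, there exists a deterministic interactive protocol Π over an erasure channel with an alphabet of size 6, with a fixed alternating order of speaking, of length N ≤ c·n/ε for an absolute constant c > 0, such that for every input pair (x,y) and every erasure pattern E with |E| ≤ (1/2 − ε)·N, both parties output the transcript π(x,y). -/

import Mathlib

/-- A noiseless alternating binary protocol: Alice sends a bit in each odd round
(i.e., when the number of previously communicated bits is even) and Bob in each even
round, the bit being a fixed function of the sender's input and the past bits. -/
structure AltProtocol (X Y : Type) where
  nextA : X → List Bool → Bool
  nextB : Y → List Bool → Bool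

/-- The transcript of the first `n` rounds of the noiseless protocol on inputs `x, y`. -/
def AltProtocol.transcript {X Y : Type} (pr : AltProtocol X Y) (x : X) (y : Y) :
    ℕ → List Bool
  | 0 => []
  | n+1 =>
    let T := pr.transcript x y n
    T ++ [if T.length % 2 = 0 then pr.nextA x T else pr.nextB y T]

/-- A deterministic interactive protocol of length `N` over an erasure channel with
alphabet `Γ` and a fixed order of speaking: `ord i = true` means Alice is the sender
of round `i`. A view item is `some s` for a symbol the party sent or received intact,
and `none` for an erased reception. There is no feedback: the sender does not learn
whether its transmission was erased. Each party's next symbol and final output are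
functions of its input and its own view. -/
structure ErasureProtocol (Γ X Y O : Type) (N : ℕ) where
  ord : Fin N → Bool
  nextA : X → List (Option Γ) → Γ
  nextB : Y → List (Option Γ) → Γ
  outA : X → List (Option Γ) → O
  outB : Y → List (Option Γ) → O

/-- The pair (Alice's view, Bob's view) after the first `i` rounds of the execution on
inputs `x, y` with erasure pattern `E`: the sender appends its sent symbol to its view;
the receiver appends `none` if the round is erased and the sent symbol otherwise. -/
def ErasureProtocol.views {Γ X Y O : Type} {N : ℕ} (P : ErasureProtocol Γ X Y O N)
    (x : X) (y : Y) (E : Finset (Fin N)) : ℕ → List (Option Γ) × List (Option Γ)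
  | 0 => ([], [])
  | i+1 =>
    let v := P.views x y E i
    if h : i < N then
      if P.ord ⟨i, h⟩ then
        let s := P.nextA x v.1
        (v.1 ++ [some s], v.2 ++ [if (⟨i, h⟩ : Fin N) ∈ E then none else some s])
      else
        let s := P.nextB y v.2
        (v.1 ++ [if (⟨i, h⟩ : Fin N) ∈ E then none else some s], v.2 ++ [some s])
    else v

/-!
Each party keeps the longest prefix of `π(x,y)` it knows, Alice an odd-length one and Bob an
even-length one, so the two lengths differ by one, and in every round the speaker sends its last
bit together with its length mod 3. That tag tells the receiver whether the speaker is one bit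
ahead, in which case the receiver appends that bit and its own reply. In the absence of erasures
the party that is ahead is always the speaker, so each round extends the common prefix by one;
an erasure costs at most two rounds. Hence after `N` rounds with `|E| ≤ (1/2 - ε) N` the common
prefix has length at least `ε N`, which is `≥ n` for `N = ⌈n/ε⌉`.
-/

namespace AltProtocol

variable {X Y : Type} (pr : AltProtocol X Y) (x : X) (y : Y)

theorem transcript_length (k : ℕ) : (pr.transcript x y k).length = k := by
  induction k with
  | zero => rfl
  | succ k ih => simp [transcript, ih]

theorem transcript_succ (k : ℕ) :
    pr.transcript x y (k + 1) = pr.transcript x y k ++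
      [if k % 2 = 0 then pr.nextA x (pr.transcript x y k) else pr.nextB y (pr.transcript x y k)] := by
  simp [transcript, transcript_length]

theorem transcript_succ_of_even {k : ℕ} (hk : k % 2 = 0) :
    pr.transcript x y (k + 1) = pr.transcript x y k ++ [pr.nextA x (pr.transcript x y k)] := by
  rw [transcript_succ, if_pos hk]

theorem transcript_succ_of_odd {k : ℕ} (hk : k % 2 = 1) :
    pr.transcript x y (k + 1) = pr.transcript x y k ++ [pr.nextB y (pr.transcript x y k)] := by
  rw [transcript_succ, if_neg (by omega)]

theorem transcript_prefix {k l : ℕ} (h : k ≤ l) : pr.transcript x y k <+: pr.transcript x y l := by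
  induction l, h using Nat.le_induction with
  | base => exact List.prefix_refl _
  | succ l _ ih => exact ih.trans (by rw [transcript_succ]; exact List.prefix_append _ _)

theorem take_transcript {k l : ℕ} (h : k ≤ l) :
    (pr.transcript x y l).take k = pr.transcript x y k := by
  rw [List.prefix_iff_eq_take.mp (pr.transcript_prefix x y h), transcript_length]

end AltProtocol

theorem count_mem_map_valEmbedding {N : ℕ} (E : Finset (Fin N)) :
    Nat.count (· ∈ E.map Fin.valEmbedding) N = E.card := by
  rw [Nat.count_eq_card_filter_range, Finset.filter_mem_eq_inter,
    Finset.inter_eq_right.mpr, Finset.card_map]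
  intro _ hj
  obtain ⟨j, -, rfl⟩ := Finset.mem_map.mp hj
  exact Finset.mem_range.mpr j.isLt

namespace ErasureSimulation

def symbolEquiv : Bool × ZMod 3 ≃ Fin 6 :=
  (finTwoEquiv.symm.prodCongr (ZMod.finEquiv 3).symm.toEquiv).trans finProdFinEquiv

def message (T : List Bool) : Fin 6 :=
  symbolEquiv (T.getLastD false, (T.length : ZMod 3))

/-- A party's own symbols, which are folded into its state as well, are ignored: their tag is
the party's own length, not its length plus one. -/
def receive (f : List Bool → Bool) (T : List Bool) : Option (Fin 6) → List Bool
  | none => T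
  | some s =>
    let (bit, tag) := symbolEquiv.symm s
    if tag = T.length + 1 then T ++ [bit, f (T ++ [bit])] else T

section

variable (f : List Bool → Bool) (T : List Bool) (b : Bool)

theorem receive_message_self : receive f T (some (message T)) = T := by
  simp [receive, message]

theorem receive_message_concat :
    receive f T (some (message (T ++ [b]))) = T ++ [b, f (T ++ [b])] := by
  simp [receive, message]

theorem receive_concat_message : receive f (T ++ [b]) (some (message T)) = T ++ [b] := by
  simp [receive, message, add_assoc, one_add_one_eq_two]
  decide

end

variable {X Y : Type} (pr : AltProtocol X Y) (x : X) (y : Y)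

theorem receive_message_transcript (f : List Bool → Bool) {r s : ℕ}
    (hrs : s = r + 1 ∨ r = s + 1)
    (hf : pr.transcript x y (r + 2) = pr.transcript x y (r + 1) ++ [f (pr.transcript x y (r + 1))]) :
    receive f (pr.transcript x y r) (some (message (pr.transcript x y s))) =
      pr.transcript x y (if s = r + 1 then r + 2 else r) := by
  rcases hrs with rfl | rfl
  · rw [if_pos rfl, hf, pr.transcript_succ x y r, receive_message_concat, List.append_assoc]
    rfl
  · rw [if_neg (by omega), pr.transcript_succ x y s, receive_concat_message]

def aliceState (v : List (Option (Fin 6))) : List Bool :=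
  v.foldl (receive (pr.nextA x)) [pr.nextA x []]

def bobState (v : List (Option (Fin 6))) : List Bool :=
  v.foldl (receive (pr.nextB y)) []

theorem aliceState_concat (v : List (Option (Fin 6))) (o : Option (Fin 6)) :
    aliceState pr x (v ++ [o]) = receive (pr.nextA x) (aliceState pr x v) o :=
  List.foldl_concat ..

theorem bobState_concat (v : List (Option (Fin 6))) (o : Option (Fin 6)) :
    bobState pr y (v ++ [o]) = receive (pr.nextB y) (bobState pr y v) o :=
  List.foldl_concat ..

def simulation (n N : ℕ) : ErasureProtocol (Fin 6) X Y (List Bool) N where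
  ord i := decide (i.val % 2 = 0)
  nextA x v := message (aliceState pr x v)
  nextB y v := message (bobState pr y v)
  outA x v := (aliceState pr x v).take n
  outB y v := (bobState pr y v).take n

/-- With `erased` the set of erased rounds, `k = progress erased i` is the length of the prefix
of `π(x,y)` known to both parties after `i` rounds: Alice knows it up to the odd length
`2 * (k / 2) + 1` and Bob up to the even length `2 * ((k + 1) / 2)`. The speaker of round `i`
(Alice iff `i` is even) is the one ahead iff `i ≡ k [MOD 2]`. -/
def progress (erased : ℕ → Prop) [DecidablePred erased] : ℕ → ℕ
  | 0 => 0
  | i + 1 =>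
    if ¬ erased i ∧ i % 2 = progress erased i % 2 then progress erased i + 1
    else progress erased i

/-- The parity term is `1` exactly when the next speaker lags behind, so that its round is
wasted even if it is not erased. -/
theorem le_two_mul_progress_add_count (erased : ℕ → Prop) [DecidablePred erased] (i : ℕ) :
    i + (i + progress erased i) % 2 ≤ 2 * (progress erased i + Nat.count erased i) := by
  induction i with
  | zero => simp [progress]
  | succ i ih =>
    rw [progress, Nat.count_succ]
    by_cases he : erased i <;> simp only [he, not_true, not_false_eq_true, false_and, true_and] <;>
      split_ifs <;> omega

theorem states_views_eq_transcript (n N : ℕ) (E : Finset (Fin N)) {i : ℕ} (hi : i ≤ N) :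
    aliceState pr x ((simulation pr n N).views x y E i).1 =
        pr.transcript x y (2 * (progress (· ∈ E.map Fin.valEmbedding) i / 2) + 1) ∧
      bobState pr y ((simulation pr n N).views x y E i).2 =
        pr.transcript x y (2 * ((progress (· ∈ E.map Fin.valEmbedding) i + 1) / 2)) := by
  induction i with
  | zero => simp [aliceState, bobState, progress, AltProtocol.transcript, ErasureProtocol.views]
  | succ i ih =>
    have h : i < N := hi
    obtain ⟨hA, hB⟩ := ih h.le
    have hE : i ∈ E.map Fin.valEmbedding ↔ (⟨i, h⟩ : Fin N) ∈ E :=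
      Finset.mem_map' Fin.valEmbedding (a := ⟨i, h⟩)
    have hord : (simulation pr n N).ord ⟨i, h⟩ = decide (i % 2 = 0) := rfl
    simp only [ErasureProtocol.views, dif_pos h, progress, hE, hord]
    set k := progress (· ∈ E.map Fin.valEmbedding) i
    set v := (simulation pr n N).views x y E i
    have hsendA : (simulation pr n N).nextA x v.1 =
        message (pr.transcript x y (2 * (k / 2) + 1)) := congrArg message hA
    have hsendB : (simulation pr n N).nextB y v.2 =
        message (pr.transcript x y (2 * ((k + 1) / 2))) := congrArg message hB
    rcases Nat.mod_two_eq_zero_or_one i with hpar | hpar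
    · simp only [hpar, decide_true, if_true, aliceState_concat, bobState_concat, hA, hB, hsendA,
        receive_message_self]
      by_cases he : (⟨i, h⟩ : Fin N) ∈ E
      · simp only [he, if_true, not_true, false_and, receive]
        exact ⟨rfl, rfl⟩
      · simp only [he, if_false, not_false_eq_true, true_and]
        rw [receive_message_transcript pr x y _ (by omega) (pr.transcript_succ_of_odd x y (by omega))]
        constructor <;> congr 1 <;> split_ifs <;> omega
    · simp only [hpar, Nat.one_ne_zero, decide_false, Bool.false_eq_true, if_false,
        aliceState_concat, bobState_concat, hA, hB, hsendB, receive_message_self]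
      by_cases he : (⟨i, h⟩ : Fin N) ∈ E
      · simp only [he, if_true, not_true, false_and, receive]
        exact ⟨rfl, rfl⟩
      · simp only [he, if_false, not_false_eq_true, true_and]
        rw [receive_message_transcript pr x y _ (by omega) (pr.transcript_succ_of_even x y (by omega))]
        constructor <;> congr 1 <;> split_ifs <;> omega

theorem mul_le_progress {N : ℕ} (E : Finset (Fin N)) {ε : ℝ}
    (hE : (E.card : ℝ) ≤ (1 / 2 - ε) * N) :
    ε * N ≤ progress (· ∈ E.map Fin.valEmbedding) N := by
  have h := le_two_mul_progress_add_count (· ∈ E.map Fin.valEmbedding) N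
  rw [count_mem_map_valEmbedding] at h
  have hN : (N : ℝ) ≤ 2 * (progress (· ∈ E.map Fin.valEmbedding) N + E.card) := by
    exact_mod_cast (Nat.le_add_right _ _).trans h
  linarith

end ErasureSimulation

open ErasureSimulation in
/-- For every ε with 0 < ε < 1/2 and every noiseless alternating binary
protocol π of length n, there is a deterministic protocol over an erasure channel with
an alphabet of size 6, with a fixed alternating order of speaking, of length
N ≤ c·n/ε for an absolute constant c > 0, such that for every input pair (x,y) and
every erasure pattern E with |E| ≤ (1/2 − ε)·N, both parties output the transcript
π(x,y). -/
theorem erasure_six_ary_half :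
    ∃ c : ℝ, 0 < c ∧
      ∀ (X Y : Type) (pr : AltProtocol X Y) (n : ℕ) (ε : ℝ),
        0 < ε → ε < 1/2 →
        ∃ (N : ℕ) (P : ErasureProtocol (Fin 6) X Y (List Bool) N),
          (∀ i : Fin N, P.ord i = decide (i.val % 2 = 0)) ∧
          (N : ℝ) ≤ c * n / ε ∧
          ∀ (x : X) (y : Y) (E : Finset (Fin N)),
            (E.card : ℝ) ≤ (1/2 - ε) * N →
            P.outA x (P.views x y E N).1 = pr.transcript x y n ∧
            P.outB y (P.views x y E N).2 = pr.transcript x y n := by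
  refine ⟨2, two_pos, fun X Y pr n ε hε hε' => ?_⟩
  set N := ⌈(n : ℝ) / ε⌉₊
  refine ⟨N, simulation pr n N, fun _ => rfl, ?_, fun x y E hE => ?_⟩
  · rcases Nat.eq_zero_or_pos n with rfl | hn
    · simp [N]
    · rw [mul_div_assoc]
      refine Nat.ceil_le_two_mul ?_
      rw [le_div_iff₀ hε]
      have : (1 : ℝ) ≤ n := by exact_mod_cast hn
      linarith
  · obtain ⟨hA, hB⟩ := states_views_eq_transcript pr x y n N E le_rfl
    have hn : (n : ℝ) ≤ ε * N := (div_le_iff₀' hε).mp (Nat.le_ceil _)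
    have hk : n ≤ progress (· ∈ E.map Fin.valEmbedding) N := by
      exact_mod_cast hn.trans (mul_le_progress E hE)
    exact ⟨(congrArg (List.take n) hA).trans (pr.take_transcript x y (by omega)),
      (congrArg (List.take n) hB).trans (pr.take_transcript x y (by omega))⟩
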